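/- arXiv:1501.07375 — 2 statements merged into one kernel-verified Lean document; each statement's English description precedes it below -/
import Mathlib

section
/- Suppose X and Y are rectifiably connected metric spaces, G ⊊ X and G′ ⊊ Y are domains, f : G → G′ is an (M,C)-coarsely quasihyperbolic homeomorphism, and γ is an ε-short arc in G with 0 < ε ≤ 1. Then the image γ′ = f(γ) is (ν,h)-solid in G′ with h = (2M+1)C + 2M and ν = 4(C+1)M(M+1)/(2C+1). -/
open Metric Set Filter

section QHDefs

variable {X : Type*} [MetricSpace X] {Y : Type*} [MetricSpace Y]

/-- Distance to the boundary of `G`. -/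
noncomputable def bdist (G : Set X) (z : X) : ℝ := Metric.infDist z (frontier G)

/-- A unit-speed (1-Lipschitz, arclength-parametrized) rectifiable curve in `G`
from `x` to `y`, parametrized on `[0, L]`, where `L` is its length. -/
structure CurveIn (G : Set X) (γ : ℝ → X) (L : ℝ) (x y : X) : Prop where
  nonneg : 0 ≤ L
  lip : LipschitzOnWith 1 γ (Set.Icc 0 L)
  source : γ 0 = x
  target : γ L = y
  mem : ∀ t ∈ Set.Icc 0 L, γ t ∈ G

/-- Quasihyperbolic length of the subcurve `γ|[s,t]` in `G`: `∫_γ |dz|/δ_G(z)`. -/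
noncomputable def qhLengthOn (G : Set X) (γ : ℝ → X) (s t : ℝ) : ℝ :=
  ∫ u in s..t, 1 / bdist G (γ u)

/-- Quasihyperbolic length of a curve parametrized on `[0,L]`. -/
noncomputable def qhLength (G : Set X) (γ : ℝ → X) (L : ℝ) : ℝ := qhLengthOn G γ 0 L

/-- Quasihyperbolic distance in `G`. -/
noncomputable def qhDist (G : Set X) (x y : X) : ℝ :=
  sInf {l | ∃ γ L, CurveIn G γ L x y ∧ qhLength G γ L = l}

/-- `X` is a `c`-quasiconvex metric space. -/
def QCSpace (c : ℝ) (X : Type*) [MetricSpace X] : Prop :=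
  ∀ x y : X, ∃ γ L, CurveIn (Set.univ : Set X) γ L x y ∧ L ≤ c * dist x y

/-- A set `G` is `c`-quasiconvex. -/
def QCSet (c : ℝ) (G : Set X) : Prop :=
  ∀ x ∈ G, ∀ y ∈ G, ∃ γ L, CurveIn G γ L x y ∧ L ≤ c * dist x y

/-- A domain: a nonempty connected open set. -/
def IsDomainSet (G : Set X) : Prop := IsOpen G ∧ IsConnected G

/-- A proper domain: a nonempty connected open set, different from the whole space. -/
def IsProperDomain (G : Set X) : Prop := IsOpen G ∧ IsConnected G ∧ G ≠ Set.univ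

/-- `G` is an `a`-John domain: each pair of points is joined by a rectifiable arc
satisfying the cone condition. -/
def IsJohn (a : ℝ) (G : Set X) : Prop :=
  ∀ x ∈ G, ∀ y ∈ G, ∃ γ L, CurveIn G γ L x y ∧
    ∀ t ∈ Set.Icc 0 L, min t (L - t) ≤ a * bdist G (γ t)

/-- `G` is a `b`-uniform domain: each pair of points is joined by a double `b`-cone arc. -/
def IsUniform (b : ℝ) (G : Set X) : Prop :=
  ∀ x ∈ G, ∀ y ∈ G, ∃ γ L, CurveIn G γ L x y ∧ L ≤ b * dist x y ∧
    ∀ t ∈ Set.Icc 0 L, min t (L - t) ≤ b * bdist G (γ t)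

/-- `G` is a locally `a`-John domain. -/
def LocallyJohn (a : ℝ) (G : Set X) : Prop :=
  ∀ x ∈ G, ∀ r : ℝ, 0 < r → r ≤ bdist G x → IsJohn a (Metric.ball x r)

/-- The `h`-coarse quasihyperbolic length of the subcurve `γ|[s,t]` in `G`:
the supremum of sums `Σ k_G(x_{j-1},x_j)` over `h`-coarse sequences of successive
points of the arc (with the convention that it is `0` if there are none). -/
noncomputable def coarseQHLength (G : Set X) (γ : ℝ → X) (s t h : ℝ) : ℝ :=
  sSup {S | ∃ n : ℕ, 0 < n ∧ ∃ u : ℕ → ℝ,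
    (∀ i < n, u i ≤ u (i + 1)) ∧ (∀ i ≤ n, u i ∈ Set.Icc s t) ∧
    (∀ i < n, h ≤ qhDist G (γ (u i)) (γ (u (i + 1)))) ∧
    S = ∑ i ∈ Finset.range n, qhDist G (γ (u i)) (γ (u (i + 1)))}

/-- `γ` (parametrized on `[0,L]`) is a `(ν,h)`-solid arc in `G`. -/
def SolidArc (G : Set X) (γ : ℝ → X) (L ν h : ℝ) : Prop :=
  ∀ s t : ℝ, 0 ≤ s → s ≤ t → t ≤ L →
    coarseQHLength G γ s t h ≤ ν * qhDist G (γ s) (γ t)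

/-- `γ` (parametrized on `[0,L]`) is an `ε`-short arc in `G`. -/
def ShortArc (G : Set X) (γ : ℝ → X) (L ε : ℝ) : Prop :=
  qhLength G γ L ≤ qhDist G (γ 0) (γ L) + ε

/-- A map is weakly `H`-quasisymmetric. -/
def WeakQS (H : ℝ) (f : X → Y) : Prop :=
  ∀ x a b : X, dist x a ≤ dist x b → dist (f x) (f a) ≤ H * dist (f x) (f b)

/-- Image of a subset `D ⊆ G` under a homeomorphism `f : G ≃ₜ G'`, as a subset of `Y`. -/
def imSet {G : Set X} {G' : Set Y} (f : ↥G ≃ₜ ↥G') (D : Set X) : Set Y :=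
  Subtype.val '' (f '' (Subtype.val ⁻¹' D))

/-- `f : G ≃ₜ G'` is `M`-quasihyperbolic. -/
def MQH (M : ℝ) {G : Set X} {G' : Set Y} (f : ↥G ≃ₜ ↥G') : Prop :=
  ∀ x y : ↥G, (1 / M) * qhDist G ↑x ↑y ≤ qhDist G' ↑(f x) ↑(f y) ∧
    qhDist G' ↑(f x) ↑(f y) ≤ M * qhDist G ↑x ↑y

/-- `f : G ≃ₜ G'` is `C`-coarsely `M`-quasihyperbolic. -/
def CQH (M C : ℝ) {G : Set X} {G' : Set Y} (f : ↥G ≃ₜ ↥G') : Prop :=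
  ∀ x y : ↥G, (qhDist G ↑x ↑y - C) / M ≤ qhDist G' ↑(f x) ↑(f y) ∧
    qhDist G' ↑(f x) ↑(f y) ≤ M * qhDist G ↑x ↑y + C

/-- `f : G ≃ₜ G'` is freely `φ`-quasiconformal: in every subdomain, the
quasihyperbolic distances of `f` and `f⁻¹` are controlled by `φ`. -/
def FQC (φ : ℝ → ℝ) {G : Set X} {G' : Set Y} (f : ↥G ≃ₜ ↥G') : Prop :=
  ∀ D : Set X, ∀ hD : D ⊆ G, IsDomainSet D →
    ∀ x : X, ∀ hx : x ∈ D, ∀ y : X, ∀ hy : y ∈ D,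
      qhDist (imSet f D) ↑(f ⟨x, hD hx⟩) ↑(f ⟨y, hD hy⟩) ≤ φ (qhDist D x y) ∧
      qhDist D x y ≤ φ (qhDist (imSet f D) ↑(f ⟨x, hD hx⟩) ↑(f ⟨y, hD hy⟩))

end QHDefs

section Aux

open MeasureTheory intervalIntegral

variable {X : Type*} [MetricSpace X] {G : Set X}

lemma aux_qhLengthOn_nonneg {γ : ℝ → X} {s t : ℝ} (h : s ≤ t) :
    0 ≤ qhLengthOn G γ s t := by
  apply intervalIntegral.integral_nonneg h
  intro u _
  exact one_div_nonneg.mpr Metric.infDist_nonneg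

lemma aux_qhDist_nonneg (G : Set X) (x y : X) : 0 ≤ qhDist G x y := by
  apply Real.sInf_nonneg
  rintro l ⟨γ, L, hc, rfl⟩
  exact aux_qhLengthOn_nonneg hc.nonneg

lemma aux_bddBelow (G : Set X) (x y : X) :
    BddBelow {l | ∃ γ L, CurveIn G γ L x y ∧ qhLength G γ L = l} := by
  refine ⟨0, ?_⟩
  rintro l ⟨γ, L, hc, rfl⟩
  exact aux_qhLengthOn_nonneg hc.nonneg

lemma aux_frontier_nonempty (hX : ∀ x y : X, ∃ γ L, CurveIn (Set.univ : Set X) γ L x y)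
    (hG : IsProperDomain G) : (frontier G).Nonempty := by
  have hpc : PreconnectedSpace X := by
    constructor
    apply isPreconnected_of_forall_pair
    intro x _ y _
    obtain ⟨γ, L, hc⟩ := hX x y
    exact ⟨γ '' Set.Icc 0 L, subset_univ _, ⟨0, left_mem_Icc.mpr hc.nonneg, hc.source⟩,
      ⟨L, right_mem_Icc.mpr hc.nonneg, hc.target⟩,
      isPreconnected_Icc.image _ hc.lip.continuousOn⟩
  rw [nonempty_frontier_iff]
  exact ⟨hG.2.1.nonempty, hG.2.2⟩

lemma aux_bdist_pos (hopen : IsOpen G) (hfr : (frontier G).Nonempty) {z : X} (hz : z ∈ G) :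
    0 < bdist G z := by
  have hnm : z ∉ frontier G := by
    rw [hopen.frontier_eq]
    exact fun h => h.2 hz
  exact (isClosed_frontier.notMem_iff_infDist_pos hfr).mp hnm

lemma aux_contOn (hopen : IsOpen G) (hfr : (frontier G).Nonempty)
    {γ : ℝ → X} {L : ℝ} {x y : X} (hγ : CurveIn G γ L x y) :
    ContinuousOn (fun u => 1 / bdist G (γ u)) (Set.Icc 0 L) := by
  have hb : ContinuousOn (fun u => bdist G (γ u)) (Set.Icc 0 L) :=
    (Metric.continuous_infDist_pt (frontier G)).comp_continuousOn hγ.lip.continuousOn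
  exact ContinuousOn.div continuousOn_const hb
    (fun u hu => (aux_bdist_pos hopen hfr (hγ.mem u hu)).ne')

lemma aux_intg (hopen : IsOpen G) (hfr : (frontier G).Nonempty)
    {γ : ℝ → X} {L : ℝ} {x y : X} (hγ : CurveIn G γ L x y) {a b : ℝ}
    (ha : a ∈ Set.Icc 0 L) (hb : b ∈ Set.Icc 0 L) :
    IntervalIntegrable (fun u => 1 / bdist G (γ u)) volume a b :=
  ((aux_contOn hopen hfr hγ).mono (Set.uIcc_subset_Icc ha hb)).intervalIntegrable

lemma aux_dle {γ : ℝ → X} {L : ℝ} (hl : LipschitzOnWith 1 γ (Set.Icc 0 L))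
    {a b : ℝ} (ha : a ∈ Set.Icc 0 L) (hb : b ∈ Set.Icc 0 L) (hab : a ≤ b) :
    dist (γ a) (γ b) ≤ b - a := by
  have := hl.dist_le_mul a ha b hb
  rw [NNReal.coe_one, one_mul, Real.dist_eq, abs_of_nonpos (by linarith : a - b ≤ 0)] at this
  linarith

lemma aux_subcurve {γ : ℝ → X} {L : ℝ} {x y : X} (hγ : CurveIn G γ L x y) {a b : ℝ}
    (h0 : 0 ≤ a) (hab : a ≤ b) (hbL : b ≤ L) :
    CurveIn G (fun t => γ (a + t)) (b - a) (γ a) (γ b) := by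
  have hmaps : ∀ t ∈ Set.Icc (0:ℝ) (b - a), a + t ∈ Set.Icc (0:ℝ) L := by
    intro t ht
    exact ⟨by linarith [ht.1], by linarith [ht.2]⟩
  refine ⟨by linarith, ?_, by simp, by rw [show a + (b - a) = b by ring], fun t ht => hγ.mem _ (hmaps t ht)⟩
  apply LipschitzOnWith.of_dist_le_mul
  intro p hp q hq
  calc dist (γ (a + p)) (γ (a + q)) ≤ 1 * dist (a + p) (a + q) :=
        by exact_mod_cast hγ.lip.dist_le_mul _ (hmaps p hp) _ (hmaps q hq)
    _ = ((1 : NNReal) : ℝ) * dist p q := by rw [dist_add_left]; norm_num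

lemma aux_subcurve_len (G : Set X) (γ : ℝ → X) (a b : ℝ) :
    qhLength G (fun t => γ (a + t)) (b - a) = qhLengthOn G γ a b := by
  rw [qhLength, qhLengthOn, qhLengthOn]
  rw [intervalIntegral.integral_comp_add_left (fun u => 1 / bdist G (γ u))]
  congr 1 <;> ring

lemma aux_qhDist_le {γ : ℝ → X} {L : ℝ} {x y : X} (hγ : CurveIn G γ L x y) {a b : ℝ}
    (h0 : 0 ≤ a) (hab : a ≤ b) (hbL : b ≤ L) :
    qhDist G (γ a) (γ b) ≤ qhLengthOn G γ a b :=
  csInf_le (aux_bddBelow G _ _) ⟨_, _, aux_subcurve hγ h0 hab hbL, aux_subcurve_len G γ a b⟩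

lemma aux_concat (hopen : IsOpen G) (hfr : (frontier G).Nonempty)
    {γ₁ γ₂ : ℝ → X} {L₁ L₂ : ℝ} {x y z : X}
    (h1 : CurveIn G γ₁ L₁ x y) (h2 : CurveIn G γ₂ L₂ y z) :
    ∃ δ, CurveIn G δ (L₁ + L₂) x z ∧
      qhLength G δ (L₁ + L₂) = qhLength G γ₁ L₁ + qhLength G γ₂ L₂ := by
  classical
  have hL1 := h1.nonneg
  have hL2 := h2.nonneg
  set δ : ℝ → X := fun t => if t ≤ L₁ then γ₁ t else γ₂ (t - L₁) with hδdef
  have hval1 : ∀ t ∈ Set.Icc (0:ℝ) L₁, δ t = γ₁ t := fun t ht => if_pos ht.2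
  have hval2 : ∀ t ∈ Set.Icc L₁ (L₁ + L₂), δ t = γ₂ (t - L₁) := by
    intro t ht
    by_cases h : t ≤ L₁
    · have ht1 : t = L₁ := le_antisymm h ht.1
      rw [ht1]
      show (if L₁ ≤ L₁ then γ₁ L₁ else γ₂ (L₁ - L₁)) = γ₂ (L₁ - L₁)
      rw [if_pos le_rfl, sub_self, h1.target, h2.source]
    · exact if_neg h
  have hmem : ∀ t ∈ Set.Icc (0:ℝ) (L₁ + L₂), δ t ∈ G := by
    intro t ht
    by_cases h : t ≤ L₁
    · rw [hval1 t ⟨ht.1, h⟩]; exact h1.mem t ⟨ht.1, h⟩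
    · push_neg at h
      rw [hval2 t ⟨h.le, ht.2⟩]
      exact h2.mem _ ⟨by linarith, by linarith [ht.2]⟩
  have e12 : γ₁ L₁ = γ₂ 0 := by rw [h1.target, h2.source]
  have key : ∀ s ∈ Set.Icc (0:ℝ) (L₁+L₂), ∀ t ∈ Set.Icc (0:ℝ) (L₁+L₂), s ≤ t →
      dist (δ s) (δ t) ≤ t - s := by
    intro s hs t ht hst
    by_cases h1t : t ≤ L₁
    · rw [hval1 s ⟨hs.1, hst.trans h1t⟩, hval1 t ⟨hs.1.trans hst, h1t⟩]
      exact aux_dle h1.lip ⟨hs.1, hst.trans h1t⟩ ⟨hs.1.trans hst, h1t⟩ hst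
    · push_neg at h1t
      by_cases h1s : s ≤ L₁
      · rw [hval1 s ⟨hs.1, h1s⟩, hval2 t ⟨h1t.le, ht.2⟩]
        have d1 : dist (γ₁ s) (γ₁ L₁) ≤ L₁ - s :=
          aux_dle h1.lip ⟨hs.1, h1s⟩ ⟨hL1, le_rfl⟩ h1s
        have d2 : dist (γ₂ 0) (γ₂ (t - L₁)) ≤ (t - L₁) - 0 :=
          aux_dle h2.lip ⟨le_rfl, hL2⟩ ⟨by linarith, by linarith [ht.2]⟩ (by linarith)
        have htri := dist_triangle (γ₁ s) (γ₁ L₁) (γ₂ (t - L₁))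
        rw [e12] at htri d1
        linarith
      · push_neg at h1s
        rw [hval2 s ⟨h1s.le, hs.2⟩, hval2 t ⟨h1t.le, ht.2⟩]
        have := aux_dle h2.lip (a := s - L₁) (b := t - L₁)
          ⟨by linarith, by linarith [hs.2]⟩ ⟨by linarith, by linarith [ht.2]⟩ (by linarith)
        linarith
  have hlip : LipschitzOnWith 1 δ (Set.Icc 0 (L₁ + L₂)) := by
    apply LipschitzOnWith.of_dist_le_mul
    intro s hs t ht
    rcases le_total s t with h | h
    · calc dist (δ s) (δ t) ≤ t - s := key s hs t ht h
        _ ≤ ((1 : NNReal) : ℝ) * dist s t := by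
            rw [NNReal.coe_one, one_mul, Real.dist_eq]
            have := neg_abs_le (s - t)
            linarith
    · calc dist (δ s) (δ t) = dist (δ t) (δ s) := dist_comm _ _
        _ ≤ s - t := key t ht s hs h
        _ ≤ ((1 : NNReal) : ℝ) * dist s t := by
            rw [NNReal.coe_one, one_mul, Real.dist_eq]
            have := le_abs_self (s - t)
            linarith
  have hδc : CurveIn G δ (L₁ + L₂) x z := by
    refine ⟨by linarith, hlip, ?_, ?_, hmem⟩
    · rw [hval1 0 ⟨le_rfl, hL1⟩, h1.source]
    · rw [hval2 (L₁ + L₂) ⟨by linarith, le_rfl⟩, show L₁ + L₂ - L₁ = L₂ by ring, h2.target]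
  refine ⟨δ, hδc, ?_⟩
  have i1 : IntervalIntegrable (fun u => 1 / bdist G (δ u)) volume 0 L₁ :=
    aux_intg hopen hfr hδc ⟨le_rfl, by linarith⟩ ⟨hL1, by linarith⟩
  have i2 : IntervalIntegrable (fun u => 1 / bdist G (δ u)) volume L₁ (L₁ + L₂) :=
    aux_intg hopen hfr hδc ⟨hL1, by linarith⟩ ⟨by linarith, le_rfl⟩
  rw [qhLength, qhLength, qhLength, qhLengthOn, qhLengthOn, qhLengthOn,
    ← intervalIntegral.integral_add_adjacent_intervals i1 i2]
  congr 1
  · apply intervalIntegral.integral_congr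
    intro u hu
    rw [Set.uIcc_of_le hL1] at hu
    exact congrArg (fun w => 1 / bdist G w) (hval1 u hu)
  · have step1 : (∫ u in L₁..(L₁ + L₂), 1 / bdist G (δ u))
        = ∫ u in L₁..(L₁ + L₂), 1 / bdist G (γ₂ (u - L₁)) := by
      apply intervalIntegral.integral_congr
      intro u hu
      rw [Set.uIcc_of_le (by linarith : L₁ ≤ L₁ + L₂)] at hu
      exact congrArg (fun w => 1 / bdist G w) (hval2 u hu)
    have step2 : (∫ u in L₁..(L₁ + L₂), 1 / bdist G (γ₂ (u - L₁)))
        = ∫ u in (L₁ - L₁)..(L₁ + L₂ - L₁), 1 / bdist G (γ₂ u) :=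
      intervalIntegral.integral_comp_sub_right (fun u => 1 / bdist G (γ₂ u)) L₁
    rw [step1, step2]
    congr 1 <;> ring

lemma aux_short_sub (hopen : IsOpen G) (hfr : (frontier G).Nonempty)
    {γ : ℝ → X} {L ε : ℝ} {x y : X} (hγ : CurveIn G γ L x y)
    (hshort : ShortArc G γ L ε) {s t : ℝ} (h0 : 0 ≤ s) (hst : s ≤ t) (htL : t ≤ L) :
    qhLengthOn G γ s t ≤ qhDist G (γ s) (γ t) + ε := by
  have hsI : s ∈ Set.Icc (0:ℝ) L := ⟨h0, hst.trans htL⟩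
  have htI : t ∈ Set.Icc (0:ℝ) L := ⟨h0.trans hst, htL⟩
  have h0I : (0:ℝ) ∈ Set.Icc (0:ℝ) L := ⟨le_rfl, h0.trans (hst.trans htL)⟩
  have hLI : L ∈ Set.Icc (0:ℝ) L := ⟨h0.trans (hst.trans htL), le_rfl⟩
  have hsplit : qhLength G γ L = qhLengthOn G γ 0 s + qhLengthOn G γ s t + qhLengthOn G γ t L := by
    rw [qhLength, qhLengthOn, qhLengthOn, qhLengthOn, qhLengthOn,
      ← intervalIntegral.integral_add_adjacent_intervals (aux_intg hopen hfr hγ h0I htI)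
        (aux_intg hopen hfr hγ htI hLI),
      ← intervalIntegral.integral_add_adjacent_intervals (aux_intg hopen hfr hγ h0I hsI)
        (aux_intg hopen hfr hγ hsI htI)]
  have hkey : qhLengthOn G γ s t - ε ≤ qhDist G (γ s) (γ t) := by
    have hne : {l | ∃ δ Lδ, CurveIn G δ Lδ (γ s) (γ t) ∧ qhLength G δ Lδ = l}.Nonempty :=
      ⟨_, ⟨_, _, aux_subcurve hγ h0 hst htL, rfl⟩⟩
    rw [qhDist]
    apply le_csInf hne
    rintro l ⟨δ, Lδ, hδ, rfl⟩
    obtain ⟨e₁, he₁, hlen₁⟩ := aux_concat hopen hfr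
      (aux_subcurve hγ le_rfl h0 (hst.trans htL)) hδ
    obtain ⟨e₂, he₂, hlen₂⟩ := aux_concat hopen hfr he₁
      (aux_subcurve hγ (h0.trans hst) htL le_rfl)
    have hd : qhDist G (γ 0) (γ L) ≤
        qhLengthOn G γ 0 s + qhLength G δ Lδ + qhLengthOn G γ t L := by
      calc qhDist G (γ 0) (γ L) ≤ qhLength G e₂ (s - 0 + Lδ + (L - t)) :=
            csInf_le (aux_bddBelow G _ _) ⟨e₂, _, he₂, rfl⟩
        _ = qhLengthOn G γ 0 s + qhLength G δ Lδ + qhLengthOn G γ t L := by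
            rw [hlen₂, hlen₁, aux_subcurve_len G γ 0 s, aux_subcurve_len G γ t L]
    have hsh : qhLength G γ L ≤ qhDist G (γ 0) (γ L) + ε := hshort
    linarith
  linarith

end Aux


/-- Lemma 6: If `f : G → G'` is an `(M,C)`-CQH homeomorphism and
`γ` is an `ε`-short arc in `G` with `0 < ε ≤ 1`, then the image arc `γ'` is
`(ν,h)`-solid in `G'` with `h = (2M+1)C + 2M` and `ν = 4(C+1)M(M+1)/(2C+1)`. -/
theorem stmt10 {X : Type*} [MetricSpace X] {Y : Type*} [MetricSpace Y]
    (hX : ∀ x y : X, ∃ γ L, CurveIn (Set.univ : Set X) γ L x y)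
    (hY : ∀ x y : Y, ∃ γ L, CurveIn (Set.univ : Set Y) γ L x y)
    (G : Set X) (G' : Set Y) (hG : IsProperDomain G) (hG' : IsProperDomain G')
    (M C : ℝ) (hM : 1 ≤ M) (hC : 0 ≤ C)
    (f : ↥G ≃ₜ ↥G') (hf : CQH M C f)
    (γ : ℝ → X) (L ε : ℝ) (x y : X) (hγ : CurveIn G γ L x y)
    (hshort : ShortArc G γ L ε) (hε0 : 0 < ε) (hε1 : ε ≤ 1)
    (γ' : ℝ → Y) (hγ' : ∀ t, ∀ ht : γ t ∈ G, γ' t = ↑(f ⟨γ t, ht⟩)) :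
    SolidArc G' γ' L (4 * (C + 1) * M * (M + 1) / (2 * C + 1))
      ((2 * M + 1) * C + 2 * M) := by

  have hfrG : (frontier G).Nonempty := aux_frontier_nonempty hX hG
  have hGopen : IsOpen G := hG.1
  have hM0 : (0:ℝ) < M := lt_of_lt_of_le one_pos hM
  intro s t hs hst htL
  have hνge : 2 * M * (M + 1) ≤ 4 * (C + 1) * M * (M + 1) / (2 * C + 1) := by
    rw [le_div_iff₀ (by linarith : (0:ℝ) < 2 * C + 1)]
    nlinarith
  have hν0 : (0:ℝ) ≤ 4 * (C + 1) * M * (M + 1) / (2 * C + 1) :=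
    le_trans (by nlinarith) hνge
  have hK'0 : 0 ≤ qhDist G' (γ' s) (γ' t) := aux_qhDist_nonneg _ _ _
  rw [coarseQHLength]
  apply Real.sSup_le _ (mul_nonneg hν0 hK'0)
  rintro S ⟨n, hn, u, humono, humem, hcoarse, rfl⟩
  have huI : ∀ i ≤ n, u i ∈ Set.Icc (0:ℝ) L := fun i hi =>
    ⟨hs.trans (humem i hi).1, (humem i hi).2.trans htL⟩
  have hmemG : ∀ i ≤ n, γ (u i) ∈ G := fun i hi => hγ.mem _ (huI i hi)
  have hmono : ∀ j ≤ n, ∀ i ≤ j, u i ≤ u j := by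
    intro j
    induction j with
    | zero => intro _ i hi; interval_cases i; exact le_rfl
    | succ m ih =>
      intro hjn i hi
      rcases Nat.lt_succ_iff_lt_or_eq.mp (Nat.lt_succ_of_le hi) with h | h
      · exact (ih (by omega) i (by omega)).trans (humono m (by omega))
      · rw [h]
  -- CQH bounds
  have hupper : ∀ i < n, qhDist G' (γ' (u i)) (γ' (u (i+1)))
      ≤ M * qhDist G (γ (u i)) (γ (u (i+1))) + C := by
    intro i hi
    rw [hγ' _ (hmemG i hi.le), hγ' _ (hmemG (i+1) hi)]
    exact (hf ⟨γ (u i), hmemG i hi.le⟩ ⟨γ (u (i+1)), hmemG (i+1) hi⟩).2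
  have hklow : ∀ i < n, 2 * (C + 1) ≤ qhDist G (γ (u i)) (γ (u (i+1))) := by
    intro i hi
    have h1 := (hcoarse i hi).trans (hupper i hi)
    have h2 : M * (2 * (C + 1)) ≤ M * qhDist G (γ (u i)) (γ (u (i+1))) := by nlinarith
    exact le_of_mul_le_mul_left h2 hM0
  have hkle : ∀ i < n, qhDist G (γ (u i)) (γ (u (i+1))) ≤ qhLengthOn G γ (u i) (u (i+1)) :=
    fun i hi => aux_qhDist_le hγ (huI i hi.le).1 (humono i hi) (huI (i+1) hi).2
  have hsum : ∀ m ≤ n, ∑ i ∈ Finset.range m, qhLengthOn G γ (u i) (u (i+1))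
      = qhLengthOn G γ (u 0) (u m) := by
    intro m
    induction m with
    | zero => intro _; simp [qhLengthOn]
    | succ p ih =>
      intro hm
      rw [Finset.sum_range_succ, ih (by omega), qhLengthOn, qhLengthOn, qhLengthOn,
        intervalIntegral.integral_add_adjacent_intervals
          (aux_intg hGopen hfrG hγ (huI 0 (by omega)) (huI p (by omega)))
          (aux_intg hGopen hfrG hγ (huI p (by omega)) (huI (p+1) hm))]
  have hsI : s ∈ Set.Icc (0:ℝ) L := ⟨hs, hst.trans htL⟩
  have htI : t ∈ Set.Icc (0:ℝ) L := ⟨hs.trans hst, htL⟩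
  have hle_st : qhLengthOn G γ (u 0) (u n) ≤ qhLengthOn G γ s t := by
    have e1 : qhLengthOn G γ s t
        = qhLengthOn G γ s (u 0) + qhLengthOn G γ (u 0) (u n) + qhLengthOn G γ (u n) t := by
      rw [qhLengthOn, qhLengthOn, qhLengthOn, qhLengthOn,
        ← intervalIntegral.integral_add_adjacent_intervals
          (aux_intg hGopen hfrG hγ hsI (huI n le_rfl))
          (aux_intg hGopen hfrG hγ (huI n le_rfl) htI),
        ← intervalIntegral.integral_add_adjacent_intervals
          (aux_intg hGopen hfrG hγ hsI (huI 0 (by omega)))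
          (aux_intg hGopen hfrG hγ (huI 0 (by omega)) (huI n le_rfl))]
    have n1 : 0 ≤ qhLengthOn G γ s (u 0) := aux_qhLengthOn_nonneg (humem 0 (by omega)).1
    have n2 : 0 ≤ qhLengthOn G γ (u n) t := aux_qhLengthOn_nonneg (humem n le_rfl).2
    linarith
  have hshortsub : qhLengthOn G γ s t ≤ qhDist G (γ s) (γ t) + ε :=
    aux_short_sub hGopen hfrG hγ hshort hs hst htL
  have hsumk : ∑ i ∈ Finset.range n, qhDist G (γ (u i)) (γ (u (i+1)))
      ≤ qhDist G (γ s) (γ t) + ε := by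
    calc ∑ i ∈ Finset.range n, qhDist G (γ (u i)) (γ (u (i+1)))
        ≤ ∑ i ∈ Finset.range n, qhLengthOn G γ (u i) (u (i+1)) :=
          Finset.sum_le_sum (fun i hi => hkle i (Finset.mem_range.mp hi))
      _ = qhLengthOn G γ (u 0) (u n) := hsum n le_rfl
      _ ≤ qhLengthOn G γ s t := hle_st
      _ ≤ qhDist G (γ s) (γ t) + ε := hshortsub
  have hKst_big : 2 * C + 1 ≤ qhDist G (γ s) (γ t) := by
    have h0 := hklow 0 hn
    have hk0le : qhDist G (γ (u 0)) (γ (u 1))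
        ≤ ∑ i ∈ Finset.range n, qhDist G (γ (u i)) (γ (u (i+1))) :=
      Finset.single_le_sum (f := fun i => qhDist G (γ (u i)) (γ (u (i+1))))
        (fun i _ => aux_qhDist_nonneg G _ _) (Finset.mem_range.mpr hn)
    linarith
  have hγsG : γ s ∈ G := hγ.mem s hsI
  have hγtG : γ t ∈ G := hγ.mem t htI
  have hlow : (qhDist G (γ s) (γ t) - C) / M ≤ qhDist G' (γ' s) (γ' t) := by
    rw [hγ' s hγsG, hγ' t hγtG]
    exact (hf ⟨γ s, hγsG⟩ ⟨γ t, hγtG⟩).1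
  have hlow' : qhDist G (γ s) (γ t) - C ≤ M * qhDist G' (γ' s) (γ' t) := by
    rw [div_le_iff₀ hM0] at hlow
    linarith
  have hSle : ∑ i ∈ Finset.range n, qhDist G' (γ' (u i)) (γ' (u (i+1)))
      ≤ (M + 1) * ∑ i ∈ Finset.range n, qhDist G (γ (u i)) (γ (u (i+1))) := by
    rw [Finset.mul_sum]
    apply Finset.sum_le_sum
    intro i hi
    have hi' := Finset.mem_range.mp hi
    have h1 := hupper i hi'
    have h2 := hklow i hi'
    nlinarith
  calc ∑ i ∈ Finset.range n, qhDist G' (γ' (u i)) (γ' (u (i+1)))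
      ≤ (M + 1) * ∑ i ∈ Finset.range n, qhDist G (γ (u i)) (γ (u (i+1))) := hSle
    _ ≤ (M + 1) * (qhDist G (γ s) (γ t) + 1) := by nlinarith
    _ ≤ (M + 1) * (2 * (qhDist G (γ s) (γ t) - C)) := by nlinarith
    _ ≤ (M + 1) * (2 * (M * qhDist G' (γ' s) (γ' t))) := by nlinarith
    _ = 2 * M * (M + 1) * qhDist G' (γ' s) (γ' t) := by ring
    _ ≤ 4 * (C + 1) * M * (M + 1) / (2 * C + 1) * qhDist G' (γ' s) (γ' t) :=
        mul_le_mul_of_nonneg_right hνge hK'0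
end

section
/- Suppose X and Y are c-quasiconvex and complete metric spaces, G ⊊ X is a locally a-John domain, G′ ⊊ Y is a locally a-John domain, and f : G → G′ is a φ-FQC (freely quasiconformal) homeomorphism. Then f is θ-relative: there is a homeomorphism θ : [0,1) → [0,∞), depending only on a, c, φ, such that for all x, y ∈ G with |x−y| < δ_G(x), one has |f(x)−f(y)|/δ_{G′}(f(x)) ≤ θ(|x−y|/δ_G(x)). Explicitly one may take θ(t) = e^{φ(6ac(9c+1)t/(3c−1))} − 1 for t ∈ [0,1/(3c)] and θ(t) = e^{φ(2a(3+t)/(1−t))} − 1 for t ∈ (1/(3c), 1). -/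
open Metric Set Filter

section Aux
open Metric Set
variable {X : Type*} [MetricSpace X] {Y : Type*} [MetricSpace Y]

namespace CurveIn

theorem continuousOn {G : Set X} {γ : ℝ → X} {L x y} (h : CurveIn G γ L x y) :
    ContinuousOn γ (Set.Icc 0 L) := h.lip.continuousOn

theorem dist_le {G : Set X} {γ : ℝ → X} {L x y} (h : CurveIn G γ L x y)
    {s t : ℝ} (hs : s ∈ Set.Icc 0 L) (ht : t ∈ Set.Icc 0 L) :
    dist (γ s) (γ t) ≤ |s - t| := by
  have := h.lip.dist_le_mul s hs t ht
  simpa [Real.dist_eq] using this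

theorem dist_le' {G : Set X} {γ : ℝ → X} {L x y} (h : CurveIn G γ L x y)
    {s t : ℝ} (hs : s ∈ Set.Icc 0 L) (ht : t ∈ Set.Icc 0 L) (hst : s ≤ t) :
    dist (γ s) (γ t) ≤ t - s := by
  have := h.dist_le hs ht
  rw [abs_of_nonpos (by linarith)] at this
  linarith

/-- distance from the start point -/
theorem dist_source_le {G : Set X} {γ : ℝ → X} {L x y} (h : CurveIn G γ L x y)
    {t : ℝ} (ht : t ∈ Set.Icc 0 L) : dist x (γ t) ≤ t := by
  have := h.dist_le' (s := 0) (t := t) ⟨le_refl 0, h.nonneg⟩ ht ht.1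
  rw [h.source] at this; linarith

theorem dist_endpoints {G : Set X} {γ : ℝ → X} {L x y} (h : CurveIn G γ L x y) :
    dist x y ≤ L := by
  have := h.dist_source_le (t := L) ⟨h.nonneg, le_refl L⟩
  rw [h.target] at this; exact this

/-- reversal of a curve -/
theorem reverse {G : Set X} {γ : ℝ → X} {L x y} (h : CurveIn G γ L x y) :
    CurveIn G (fun t => γ (L - t)) L y x := by
  refine ⟨h.nonneg, ?_, by simpa using h.target, by simpa using h.source, ?_⟩
  · apply LipschitzOnWith.of_dist_le_mul
    intro s hs t ht
    have h1 : L - s ∈ Set.Icc 0 L := ⟨by linarith [hs.2], by linarith [hs.1]⟩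
    have h2 : L - t ∈ Set.Icc 0 L := ⟨by linarith [ht.2], by linarith [ht.1]⟩
    have := h.dist_le h1 h2
    have habs : |L - s - (L - t)| = |s - t| := by rw [show L - s - (L-t) = -(s-t) by ring, abs_neg]
    rw [habs] at this
    simpa [Real.dist_eq] using this
  · intro t ht
    exact h.mem (L - t) ⟨by linarith [ht.2], by linarith [ht.1]⟩

/-- constant curve -/
theorem const {G : Set X} {x : X} (hx : x ∈ G) :
    CurveIn G (fun _ => x) 0 x x := by
  refine ⟨le_refl 0, ?_, rfl, rfl, fun t _ => hx⟩
  apply LipschitzOnWith.of_dist_le_mul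
  intro s _ t _; simp [dist_nonneg]

/-- concatenation of curves -/
theorem trans {G : Set X} {γ₁ γ₂ : ℝ → X} {L₁ L₂ x y z}
    (h₁ : CurveIn G γ₁ L₁ x y) (h₂ : CurveIn G γ₂ L₂ y z) :
    CurveIn G (fun t => if t ≤ L₁ then γ₁ t else γ₂ (t - L₁)) (L₁ + L₂) x z := by
  have k1 := h₁.nonneg; have k2 := h₂.nonneg
  refine ⟨by linarith, ?_, ?_, ?_, ?_⟩
  · apply LipschitzOnWith.of_dist_le_mul
    have key : ∀ s ∈ Set.Icc (0:ℝ) (L₁ + L₂), ∀ t ∈ Set.Icc (0:ℝ) (L₁ + L₂), s ≤ t →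
        dist (if s ≤ L₁ then γ₁ s else γ₂ (s - L₁)) (if t ≤ L₁ then γ₁ t else γ₂ (t - L₁))
          ≤ 1 * dist s t := by
      intro s hs t ht hst
      have hd : dist s t = t - s := by rw [Real.dist_eq, abs_of_nonpos (by linarith)]; ring
      rw [one_mul, hd]
      by_cases h1 : s ≤ L₁ <;> by_cases h2 : t ≤ L₁ <;> simp only [h1, h2, if_true, if_false]
      · exact h₁.dist_le' ⟨hs.1, h1⟩ ⟨ht.1, h2⟩ hst
      · calc dist (γ₁ s) (γ₂ (t - L₁))
            ≤ dist (γ₁ s) (γ₁ L₁) + dist (γ₁ L₁) (γ₂ (t - L₁)) := dist_triangle _ _ _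
          _ ≤ (L₁ - s) + (t - L₁) := by
              have e1 := h₁.dist_le' ⟨hs.1, h1⟩ ⟨k1, le_refl L₁⟩ h1
              have e2 : dist (γ₂ 0) (γ₂ (t - L₁)) ≤ (t - L₁) - 0 :=
                h₂.dist_le' ⟨le_refl 0, k2⟩ ⟨by linarith [not_le.mp h2], by linarith [ht.2]⟩
                  (by linarith [not_le.mp h2])
              have e2' : dist (γ₁ L₁) (γ₂ (t - L₁)) ≤ t - L₁ := by
                rw [h₁.target, ← h₂.source]; linarith
              exact add_le_add e1 e2'
          _ = t - s := by ring
      · linarith [not_le.mp h1]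
      · have := h₂.dist_le' (s := s - L₁) (t := t - L₁)
          ⟨by linarith [not_le.mp h1], by linarith [hs.2]⟩
          ⟨by linarith [not_le.mp h2], by linarith [ht.2]⟩ (by linarith)
        calc dist (γ₂ (s - L₁)) (γ₂ (t - L₁)) ≤ (t - L₁) - (s - L₁) := this
          _ = t - s := by ring
    intro s hs t ht
    rcases le_total s t with hst | hts
    · exact key s hs t ht hst
    · rw [dist_comm, dist_comm s t]; exact key t ht s hs hts
  · simp only [if_pos k1]; exact h₁.source
  · by_cases hL : L₁ + L₂ ≤ L₁
    · have : L₂ = 0 := le_antisymm (by linarith) k2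
      simp only [if_pos hL]
      have : γ₁ (L₁ + L₂) = γ₁ L₁ := by rw [show L₁ + L₂ = L₁ by linarith]
      rw [this, h₁.target, ← h₂.source, show (0:ℝ) = L₂ by linarith, h₂.target]
    · simp only [if_neg hL, add_sub_cancel_left, h₂.target]
  · intro t ht
    by_cases h1 : t ≤ L₁
    · simp only [if_pos h1]; exact h₁.mem t ⟨ht.1, h1⟩
    · simp only [if_neg h1]
      exact h₂.mem (t - L₁) ⟨by linarith [not_le.mp h1], by linarith [ht.2]⟩

end CurveIn
end Aux

section Aux2
open Metric Set
variable {X : Type*} [MetricSpace X]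

theorem qhLength_eq (G : Set X) (γ : ℝ → X) (L : ℝ) :
    qhLength G γ L = ∫ u in (0:ℝ)..L, 1 / bdist G (γ u) := rfl

theorem qhLength_nonneg {G : Set X} {γ : ℝ → X} {L : ℝ} (hL : 0 ≤ L) :
    0 ≤ qhLength G γ L := by
  rw [qhLength_eq]
  exact intervalIntegral.integral_nonneg hL
    (fun u _ => one_div_nonneg.mpr Metric.infDist_nonneg)

theorem qhDist_le_qhLength {G : Set X} {γ : ℝ → X} {L : ℝ} {x y : X}
    (h : CurveIn G γ L x y) : qhDist G x y ≤ qhLength G γ L := by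
  apply csInf_le
  · refine ⟨0, ?_⟩
    rintro l ⟨γ', L', h', rfl⟩
    exact qhLength_nonneg h'.nonneg
  · exact ⟨γ, L, h, rfl⟩

theorem qhDist_nonneg {G : Set X} {x y : X} : 0 ≤ qhDist G x y := by
  apply Real.sInf_nonneg
  rintro l ⟨γ', L', h', rfl⟩
  exact qhLength_nonneg h'.nonneg

/-- 1-Lipschitz bound for `bdist` -/
theorem bdist_ge (G : Set X) (x z : X) : bdist G x - dist x z ≤ bdist G z := by
  have := Metric.infDist_le_infDist_add_dist (x := x) (y := z) (s := frontier G)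
  unfold bdist; linarith

/-- a curve staying in the ball `B(x, r)`, `r < bdist G x`, starting at `x ∈ G`, stays in `G` -/
theorem curve_in_ball_mem {G : Set X} (hGopen : IsOpen G) {x : X} (hx : x ∈ G) {r : ℝ}
    (hr : r < bdist G x) {γ : ℝ → X} {L : ℝ} {y : X}
    (h : CurveIn (Metric.ball x r) γ L x y) :
    ∀ t ∈ Set.Icc 0 L, γ t ∈ G := by
  have hpos : ∀ t ∈ Set.Icc 0 L, 0 < bdist G (γ t) := by
    intro t ht
    have hb := h.mem t ht
    rw [Metric.mem_ball, dist_comm] at hb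
    have := bdist_ge G x (γ t)
    linarith
  have hnf : ∀ t ∈ Set.Icc 0 L, γ t ∉ frontier G := by
    intro t ht hmem
    have : bdist G (γ t) = 0 := Metric.infDist_zero_of_mem hmem
    linarith [hpos t ht]
  -- clopen argument on the subtype Icc 0 L
  haveI : PreconnectedSpace (Set.Icc (0:ℝ) L) := Subtype.preconnectedSpace isPreconnected_Icc
  set ψ : Set.Icc (0:ℝ) L → X := (Set.Icc (0:ℝ) L).restrict γ with hψ
  have hψc : Continuous ψ := h.continuousOn.restrict
  set S : Set (Set.Icc (0:ℝ) L) := ψ ⁻¹' G with hS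
  have hSopen : IsOpen S := hGopen.preimage hψc
  have hScompl : Sᶜ = ψ ⁻¹' (closure G)ᶜ := by
    ext t
    simp only [Set.mem_compl_iff, Set.mem_preimage]
    constructor
    · intro hnG hcl
      exact hnf t t.2 (by rw [hGopen.frontier_eq]; exact ⟨hcl, hnG⟩)
    · intro hncl hG'
      exact hncl (subset_closure hG')
  have hSclosed : IsClosed S := by
    rw [← isOpen_compl_iff, hScompl]
    exact (isClosed_closure.isOpen_compl).preimage hψc
  have h0 : (⟨0, ⟨le_refl 0, h.nonneg⟩⟩ : Set.Icc (0:ℝ) L) ∈ S := by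
    show γ 0 ∈ G
    rw [h.source]; exact hx
  have : S = Set.univ := by
    rcases isClopen_iff.mp ⟨hSclosed, hSopen⟩ with h1 | h1
    · exact absurd (h1 ▸ h0) (Set.notMem_empty _)
    · exact h1
  intro t ht
  have : (⟨t, ht⟩ : Set.Icc (0:ℝ) L) ∈ S := this ▸ Set.mem_univ _
  exact this

/-- Main domain-side estimate via a John ball. -/
theorem qhDist_le_of_locallyJohn {G : Set X} (hGopen : IsOpen G) {a : ℝ} (ha : 1 ≤ a)
    (hGJ : LocallyJohn a G) {x y : X} (hx : x ∈ G) (hxy : x ≠ y)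
    {r : ℝ} (h1 : dist x y < r) (h2 : r < bdist G x) :
    qhDist G x y ≤ 4 * a * r / (bdist G x - r) := by
  set d := bdist G x with hd
  have hepos : 0 < dist x y := dist_pos.mpr hxy
  have hrpos : 0 < r := lt_trans hepos h1
  have hdr : 0 < d - r := by linarith
  have hJ : IsJohn a (Metric.ball x r) := hGJ x hx r hrpos (le_of_lt h2)
  obtain ⟨γ, L, hcurve, hcone⟩ := hJ x (Metric.mem_ball_self hrpos) y
    (by rw [Metric.mem_ball, dist_comm]; exact h1)
  have hLpos : 0 < L := lt_of_lt_of_le hepos hcurve.dist_endpoints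
  have hmid : L / 2 ∈ Set.Icc 0 L := ⟨by linarith, by linarith⟩
  have hL : L ≤ 4 * a * r := by
    have hcone2 := hcone (L/2) hmid
    have hminval : min (L/2) (L - L/2) = L/2 := by
      rw [min_eq_left]; linarith
    rw [hminval] at hcone2
    rcases Set.eq_empty_or_nonempty (frontier (Metric.ball x r)) with hfe | ⟨w, hw⟩
    · exfalso
      have : bdist (Metric.ball x r) (γ (L/2)) = 0 := by
        unfold bdist; rw [hfe]; exact Metric.infDist_empty
      rw [this] at hcone2
      simp at hcone2
      linarith
    · have hb1 : bdist (Metric.ball x r) (γ (L/2)) ≤ dist (γ (L/2)) w :=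
        Metric.infDist_le_dist_of_mem hw
      have hb2 : dist (γ (L/2)) w ≤ dist (γ (L/2)) x + dist x w := dist_triangle _ _ _
      have hb3 : dist (γ (L/2)) x < r := by
        have := hcurve.mem (L/2) hmid
        rwa [Metric.mem_ball] at this
      have hb4 : dist x w ≤ r := by
        have : w ∈ Metric.closedBall x r :=
          Metric.closure_ball_subset_closedBall (frontier_subset_closure hw)
        rw [Metric.mem_closedBall] at this
        rwa [dist_comm]
      have ha0 : (0:ℝ) < a := by linarith
      nlinarith
  have hmemG := curve_in_ball_mem hGopen hx h2 hcurve
  have hcurveG : CurveIn G γ L x y :=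
    ⟨hcurve.nonneg, hcurve.lip, hcurve.source, hcurve.target, hmemG⟩
  have hbd : ∀ t ∈ Set.Icc 0 L, d - r ≤ bdist G (γ t) := by
    intro t ht
    have hb := hcurve.mem t ht
    rw [Metric.mem_ball, dist_comm] at hb
    have := bdist_ge G x (γ t)
    linarith
  have hqlen : qhLength G γ L ≤ L / (d - r) := by
    rw [qhLength_eq]
    have huIcc : Set.uIcc (0:ℝ) L = Set.Icc 0 L := Set.uIcc_of_le hcurve.nonneg
    have hcont : ContinuousOn (fun u => 1 / bdist G (γ u)) (Set.Icc (0:ℝ) L) := by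
      apply ContinuousOn.div continuousOn_const
      · exact (Metric.continuous_infDist_pt (frontier G)).comp_continuousOn hcurveG.continuousOn
      · intro u hu
        have := hbd u hu
        exact ne_of_gt (lt_of_lt_of_le hdr this)
    have hint1 : IntervalIntegrable (fun u => 1 / bdist G (γ u)) MeasureTheory.volume 0 L := by
      apply ContinuousOn.intervalIntegrable; rwa [huIcc]
    have hint2 : IntervalIntegrable (fun _ : ℝ => 1 / (d - r)) MeasureTheory.volume 0 L :=
      intervalIntegrable_const
    have hmono := intervalIntegral.integral_mono_on hcurve.nonneg hint1 hint2
      (fun u hu => one_div_le_one_div_of_le hdr (hbd u hu))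
    calc (∫ u in (0:ℝ)..L, 1 / bdist G (γ u)) ≤ ∫ _ in (0:ℝ)..L, 1/(d-r) := hmono
      _ = L / (d - r) := by rw [intervalIntegral.integral_const]; simp [div_eq_mul_inv]
  calc qhDist G x y ≤ qhLength G γ L := qhDist_le_qhLength hcurveG
    _ ≤ L / (d - r) := hqlen
    _ ≤ 4 * a * r / (d - r) := by gcongr

end Aux2

section Aux3
open Metric Set
variable {Y : Type*} [MetricSpace Y]

theorem bdist_pos_of_mem {G : Set Y} (hop : IsOpen G) (hfr : (frontier G).Nonempty)
    {z : Y} (hz : z ∈ G) : 0 < bdist G z := by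
  have hnm : z ∉ frontier G := by
    rw [hop.frontier_eq]
    exact fun h => h.2 hz
  exact (isClosed_frontier.notMem_iff_infDist_pos hfr).mp hnm

/-- every curve in `G'` from `u` to `v` has qh-length at least `log(1 + |u-v|/δ(u))`. -/
theorem log_le_qhLength {G : Set Y} (hop : IsOpen G) (hfr : (frontier G).Nonempty)
    {γ : ℝ → Y} {L : ℝ} {u v : Y} (h : CurveIn G γ L u v) :
    Real.log (1 + dist u v / bdist G u) ≤ qhLength G γ L := by
  set δ := bdist G u with hδ
  have hu : u ∈ G := by have := h.mem 0 ⟨le_refl 0, h.nonneg⟩; rwa [h.source] at this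
  have hδpos : 0 < δ := bdist_pos_of_mem hop hfr hu
  have hbpos : ∀ s ∈ Set.Icc 0 L, 0 < bdist G (γ s) :=
    fun s hs => bdist_pos_of_mem hop hfr (h.mem s hs)
  have hptw : ∀ s ∈ Set.Icc 0 L, 1 / (δ + s) ≤ 1 / bdist G (γ s) := by
    intro s hs
    apply one_div_le_one_div_of_le (hbpos s hs)
    have h1 : bdist G (γ s) - dist (γ s) u ≤ δ := by
      have := Metric.infDist_le_infDist_add_dist (x := γ s) (y := u) (s := frontier G)
      unfold δ at *; unfold bdist; linarith
    have h2 : dist (γ s) u ≤ s := by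
      rw [dist_comm]; exact h.dist_source_le hs
    linarith
  have hint1 : IntervalIntegrable (fun s => 1 / (δ + s)) MeasureTheory.volume 0 L := by
    apply ContinuousOn.intervalIntegrable
    rw [Set.uIcc_of_le h.nonneg]
    apply ContinuousOn.div continuousOn_const (by fun_prop)
    intro s hs
    have : 0 < δ + s := by linarith [hs.1]
    exact ne_of_gt this
  have hint2 : IntervalIntegrable (fun s => 1 / bdist G (γ s)) MeasureTheory.volume 0 L := by
    apply ContinuousOn.intervalIntegrable
    rw [Set.uIcc_of_le h.nonneg]
    apply ContinuousOn.div continuousOn_const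
    · exact (Metric.continuous_infDist_pt (frontier G)).comp_continuousOn h.continuousOn
    · exact fun s hs => ne_of_gt (hbpos s hs)
  have hmono := intervalIntegral.integral_mono_on h.nonneg hint1 hint2 hptw
  have hcalc : (∫ s in (0:ℝ)..L, 1 / (δ + s)) = Real.log ((δ + L) / δ) := by
    rw [intervalIntegral.integral_comp_add_left (fun x => 1 / x) δ]
    rw [integral_one_div]
    · norm_num
    · intro hmem
      rw [Set.uIcc_of_le (by linarith [h.nonneg] : δ + 0 ≤ δ + L)] at hmem
      linarith [hmem.1]
  have hlogle : Real.log (1 + dist u v / δ) ≤ Real.log ((δ + L) / δ) := by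
    apply Real.log_le_log (by positivity)
    rw [add_div, div_self (ne_of_gt hδpos)]
    have : dist u v ≤ L := h.dist_endpoints
    gcongr
  rw [qhLength_eq]
  calc Real.log (1 + dist u v / δ) ≤ Real.log ((δ + L)/δ) := hlogle
    _ = ∫ s in (0:ℝ)..L, 1 / (δ + s) := hcalc.symm
    _ ≤ _ := hmono

/-- existence of curves in open connected proper subsets of quasiconvex spaces -/
theorem exists_curveIn {c : ℝ} (hc : 1 ≤ c) (hY : QCSpace c Y) {G : Set Y}
    (hop : IsOpen G) (hconn : IsPreconnected G) (hne : G ≠ Set.univ)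
    {u v : Y} (hu : u ∈ G) (hv : v ∈ G) : ∃ γ L, CurveIn G γ L u v := by
  have hcpos : (0:ℝ) < c := by linarith
  have hcne : (Gᶜ).Nonempty := Set.nonempty_compl.mpr hne
  set R : Y → ℝ := fun z => Metric.infDist z Gᶜ with hR
  have hRpos : ∀ z ∈ G, 0 < R z := by
    intro z hz
    exact (hop.isClosed_compl.notMem_iff_infDist_pos hcne).mp (fun h => h hz)
  have hballsub : ∀ z ∈ G, Metric.ball z (R z) ⊆ G := by
    intro z hz w hw
    rw [Metric.mem_ball] at hw
    by_contra hwn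
    have : R z ≤ dist z w := Metric.infDist_le_dist_of_mem hwn
    rw [dist_comm] at this; linarith
  -- one quasiconvex step
  have hstep : ∀ z ∈ G, ∀ w, dist z w < R z / c → ∃ γ L, CurveIn G γ L z w := by
    intro z hz w hw
    obtain ⟨γ, L, hγ, hL⟩ := hY z w
    have hLlt : L < R z := by
      have : c * dist z w < R z := by
        have := (mul_lt_mul_iff_right₀ hcpos).mpr hw
        rwa [mul_div_cancel₀ _ (ne_of_gt hcpos)] at this
      linarith
    refine ⟨γ, L, ⟨hγ.nonneg, hγ.lip, hγ.source, hγ.target, ?_⟩⟩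
    intro t ht
    apply hballsub z hz
    rw [Metric.mem_ball, dist_comm]
    exact lt_of_le_of_lt (hγ.dist_source_le ht) (lt_of_le_of_lt ht.2 hLlt)
  set S : Set Y := {w | w ∈ G ∧ ∃ γ L, CurveIn G γ L u w} with hS
  set U : Set Y := ⋃ z ∈ S, Metric.ball z (R z / c) with hU
  set V : Set Y := ⋃ z ∈ G \ S, Metric.ball z (R z / c) with hV
  have hUopen : IsOpen U := isOpen_biUnion fun _ _ => Metric.isOpen_ball
  have hVopen : IsOpen V := isOpen_biUnion fun _ _ => Metric.isOpen_ball
  have hUS : U ⊆ S := by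
    rintro w hw
    rw [Set.mem_iUnion₂] at hw
    obtain ⟨z, hzS, hball⟩ := hw
    rw [Metric.mem_ball, dist_comm] at hball
    obtain ⟨γ₁, L₁, hγ₁⟩ := hzS.2
    obtain ⟨γ₂, L₂, hγ₂⟩ := hstep z hzS.1 w hball
    refine ⟨?_, _, _, hγ₁.trans hγ₂⟩
    have := hγ₂.mem L₂ ⟨hγ₂.nonneg, le_refl _⟩
    rwa [hγ₂.target] at this
  have hVS : ∀ w ∈ V, w ∉ S := by
    rintro w hw hwS
    rw [Set.mem_iUnion₂] at hw
    obtain ⟨z, hzV, hball⟩ := hw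
    rw [Metric.mem_ball, dist_comm] at hball
    obtain ⟨γ₁, L₁, hγ₁⟩ := hwS.2
    obtain ⟨γ₂, L₂, hγ₂⟩ := hstep z hzV.1 w hball
    exact hzV.2 ⟨hzV.1, _, _, hγ₁.trans hγ₂.reverse⟩
  have hdisj : Disjoint U V := by
    rw [Set.disjoint_left]
    intro w hwU hwV
    exact hVS w hwV (hUS hwU)
  have hcover : G ⊆ U ∪ V := by
    intro z hz
    by_cases hzS : z ∈ S
    · left
      rw [Set.mem_iUnion₂]
      exact ⟨z, hzS, by rw [Metric.mem_ball, dist_self]; exact div_pos (hRpos z hzS.1) hcpos⟩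
    · right
      rw [Set.mem_iUnion₂]
      refine ⟨z, ⟨hz, hzS⟩, by rw [Metric.mem_ball, dist_self]; exact div_pos (hRpos z hz) hcpos⟩
  have huS : u ∈ S := ⟨hu, ⟨_, _, CurveIn.const hu⟩⟩
  have hGU : G ⊆ U := by
    apply hconn.subset_left_of_subset_union hUopen hVopen hdisj hcover
    refine ⟨u, hu, ?_⟩
    rw [hU, Set.mem_iUnion₂]
    exact ⟨u, huS, by rw [Metric.mem_ball, dist_self]; exact div_pos (hRpos u hu) hcpos⟩
  exact (hUS (hGU hv)).2

end Aux3

section Aux4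
open Metric Set
variable {X : Type*} [MetricSpace X] {Y : Type*} [MetricSpace Y]

theorem imSet_coe_eq {G : Set X} {G' : Set Y} (f : ↥G ≃ₜ ↥G') : imSet f G = G' := by
  unfold imSet
  have h1 : (Subtype.val ⁻¹' G : Set ↥G) = Set.univ := Set.eq_univ_of_forall fun z => z.2
  rw [h1, Set.image_univ, f.surjective.range_eq, Set.image_univ, Subtype.range_coe]

end Aux4

theorem stmt14' {X : Type*} [MetricSpace X] {Y : Type*} [MetricSpace Y]
    [CompleteSpace X] [CompleteSpace Y] (c : ℝ) (hc : 1 ≤ c)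
    (hX : QCSpace c X) (hY : QCSpace c Y)
    (G : Set X) (G' : Set Y) (hG : IsProperDomain G) (hG' : IsProperDomain G')
    (a : ℝ) (ha : 1 ≤ a) (hGJ : LocallyJohn a G) (hG'J : LocallyJohn a G')
    (φ : ℝ → ℝ) (hφ0 : φ 0 = 0) (hφmono : StrictMonoOn φ (Set.Ici 0))
    (hφcont : ContinuousOn φ (Set.Ici 0))
    (hφsurj : Set.SurjOn φ (Set.Ici 0) (Set.Ici 0))
    (hφge : ∀ t, 0 ≤ t → t ≤ φ t)
    (f : ↥G ≃ₜ ↥G') (hf : FQC φ f) :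
    ∀ x y : ↥G, dist (x : X) (y : X) < bdist G ↑x →
      dist (f x : Y) (f y : Y) / bdist G' ↑(f x) ≤
        (if dist (x : X) (y : X) / bdist G ↑x ≤ 1 / (3 * c) then
            Real.exp (φ (6 * a * c * (9 * c + 1) *
              (dist (x : X) (y : X) / bdist G ↑x) / (3 * c - 1))) - 1
          else
            Real.exp (φ (2 * a * (3 + dist (x : X) (y : X) / bdist G ↑x) /
              (1 - dist (x : X) (y : X) / bdist G ↑x))) - 1) := by
  intro x y hxy
  have hcpos : (0:ℝ) < c := lt_of_lt_of_le one_pos hc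
  have h3c1 : (0:ℝ) < 3*c - 1 := by linarith
  have hapos : (0:ℝ) < a := lt_of_lt_of_le one_pos ha
  by_cases hxyeq : (x : X) = (y : X)
  · -- trivial case x = y
    have hxy' : x = y := Subtype.ext hxyeq
    subst hxy'
    have hif : dist (x:X) (x:X) / bdist G ↑x ≤ 1/(3*c) := by
      rw [dist_self, zero_div]; positivity
    rw [if_pos hif]
    rw [dist_self, dist_self, zero_div, zero_div, mul_zero, zero_div, hφ0, Real.exp_zero]
    norm_num
  · -- main case
    set d := bdist G (x:X) with hdd
    set e := dist (x:X) (y:X) with hee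
    have hepos : 0 < e := dist_pos.mpr hxyeq
    have hd : 0 < d := lt_trans hepos hxy
    -- image side setup
    haveI hYpre : PreconnectedSpace Y := by
      constructor
      apply isPreconnected_of_forall ((f x : Y))
      intro z _
      obtain ⟨γ, L, hγ, _⟩ := hY (f x : Y) z
      exact ⟨γ '' Set.Icc 0 L, Set.subset_univ _,
        ⟨0, ⟨le_refl 0, hγ.nonneg⟩, hγ.source⟩,
        ⟨L, ⟨hγ.nonneg, le_refl L⟩, hγ.target⟩,
        isPreconnected_Icc.image γ hγ.continuousOn⟩
    have hfr' : (frontier G').Nonempty := by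
      rcases Set.eq_empty_or_nonempty (frontier G') with h | h
      · exfalso
        have hclopen : IsClopen G' := isClopen_iff_frontier_eq_empty.mpr h
        rcases isClopen_iff.mp hclopen with h1 | h1
        · exact hG'.2.1.nonempty.ne_empty h1
        · exact hG'.2.2 h1
      · exact h
    have huG' : (f x : Y) ∈ G' := (f x).2
    have hvG' : (f y : Y) ∈ G' := (f y).2
    have hδ'pos : 0 < bdist G' (f x : Y) := bdist_pos_of_mem hG'.1 hfr' huG'
    have hlow : Real.log (1 + dist (f x : Y) (f y : Y) / bdist G' (f x : Y)) ≤
        qhDist G' (f x : Y) (f y : Y) := by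
      obtain ⟨γ, L, hγ⟩ := exists_curveIn hc hY hG'.1 hG'.2.1.isPreconnected hG'.2.2 huG' hvG'
      unfold qhDist
      refine le_csInf ⟨qhLength G' γ L, γ, L, hγ, rfl⟩ ?_
      rintro b ⟨γ', L', h', rfl⟩
      exact log_le_qhLength hG'.1 hfr' h'
    have hfqc := (hf G (subset_refl G) ⟨hG.1, hG.2.1⟩ (x:X) x.2 (y:X) y.2).1
    rw [imSet_coe_eq f] at hfqc
    have hxx : (⟨(x:X), subset_refl G x.2⟩ : ↥G) = x := Subtype.ext rfl
    have hyy : (⟨(y:X), subset_refl G y.2⟩ : ↥G) = y := Subtype.ext rfl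
    rw [hxx, hyy] at hfqc
    -- common ending
    have ending : ∀ A : ℝ, 0 ≤ A → qhDist G (x:X) (y:X) ≤ A →
        dist (f x : Y) (f y : Y) / bdist G' (f x : Y) ≤ Real.exp (φ A) - 1 := by
      intro A hA0 hKA
      have hk0 : (0:ℝ) ≤ qhDist G (x:X) (y:X) := qhDist_nonneg
      have hφle : φ (qhDist G (x:X) (y:X)) ≤ φ A :=
        hφmono.monotoneOn (Set.mem_Ici.mpr hk0) (Set.mem_Ici.mpr hA0) hKA
      have hchain : Real.log (1 + dist (f x : Y) (f y : Y) / bdist G' (f x : Y)) ≤ φ A :=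
        le_trans hlow (le_trans hfqc hφle)
      have hq0 : 0 ≤ dist (f x : Y) (f y : Y) / bdist G' (f x : Y) :=
        div_nonneg dist_nonneg (le_of_lt hδ'pos)
      have h1q : 0 < 1 + dist (f x : Y) (f y : Y) / bdist G' (f x : Y) := by linarith
      have hexp := Real.exp_le_exp.mpr hchain
      rw [Real.exp_log h1q] at hexp
      linarith
    by_cases hcase : e / d ≤ 1/(3*c)
    · rw [if_pos hcase]
      have h1 : e * (3*c) ≤ d := by
        rw [div_le_div_iff₀ hd (by positivity)] at hcase
        linarith
      have h2e : 2*e < d := by nlinarith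
      have hb := qhDist_le_of_locallyJohn hG.1 ha hGJ x.2 hxyeq
        (show dist (x:X) (y:X) < 2*e by rw [← hee]; linarith)
        (show 2*e < bdist G (x:X) by rw [← hdd]; exact h2e)
      have harith : 4*a*(2*e)/(d - 2*e) ≤ 6*a*c*(9*c+1)*(e/d)/(3*c-1) := by
        have hrhs : 6*a*c*(9*c+1)*(e/d)/(3*c-1) = (6*a*c*(9*c+1)*e)/(d*(3*c-1)) := by
          rw [mul_div_assoc', div_div]
        rw [hrhs, div_le_div_iff₀ (by linarith) (by positivity)]
        have hs : (0:ℝ) ≤ d - 3*c*e := by linarith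
        have hq1 : (0:ℝ) ≤ 27*c^2 - 27*c + 2 := by nlinarith
        have hq2 : (0:ℝ) ≤ 54*c^2 - 18*c + 8 := by nlinarith
        nlinarith [mul_nonneg (mul_nonneg hapos.le hepos.le)
            (mul_nonneg (mul_nonneg hepos.le (by linarith : (0:ℝ) ≤ 6*c)) hq1),
          mul_nonneg (mul_nonneg hapos.le hepos.le) (mul_nonneg hs hq2)]
      have hA1 : (0:ℝ) ≤ 6*a*c*(9*c+1)*(e/d)/(3*c-1) := by
        apply div_nonneg _ h3c1.le
        have hq : (0:ℝ) ≤ e/d := by positivity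
        have h9 : (0:ℝ) ≤ 9*c+1 := by linarith
        exact mul_nonneg (mul_nonneg (mul_nonneg (mul_nonneg
          (by norm_num : (0:ℝ) ≤ 6) hapos.le) hcpos.le) h9) hq
      exact ending _ hA1 (le_trans hb harith)
    · rw [if_neg hcase]
      have hed : e < d := hxy
      have hb := qhDist_le_of_locallyJohn hG.1 ha hGJ x.2 hxyeq
        (show dist (x:X) (y:X) < (d+e)/2 by rw [← hee]; linarith)
        (show (d+e)/2 < bdist G (x:X) by rw [← hdd]; linarith)
      have hde : 0 < d - e := by linarith
      have h1q : 0 < 1 - e/d := by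
        rw [sub_pos]
        exact (div_lt_one hd).mpr hed
      have harith : 4*a*((d+e)/2)/(d - (d+e)/2) ≤ 2*a*(3 + e/d)/(1 - e/d) := by
        rw [div_le_div_iff₀ (by linarith) h1q]
        have hdne : d ≠ 0 := ne_of_gt hd
        field_simp
        nlinarith [mul_nonneg hapos.le (sq_nonneg (d-e)), sq_nonneg (d-e), hd.le]
      have hA2 : (0:ℝ) ≤ 2*a*(3 + e/d)/(1 - e/d) := by
        apply div_nonneg _ h1q.le
        have hq : (0:ℝ) ≤ e/d := by positivity
        exact mul_nonneg (mul_nonneg (by norm_num : (0:ℝ) ≤ 2) hapos.le) (by linarith)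
      exact ending _ hA2 (le_trans hb harith)



/-- from Lemma 8: If `X, Y` are `c`-quasiconvex complete metric
spaces, `G ⊊ X` and `G' ⊊ Y` are locally `a`-John domains, and `f : G → G'` is
`φ`-FQC (where `φ : [0,∞) → [0,∞)` is a homeomorphism with `φ(t) ≥ t`), then `f`
is `θ`-relative with the explicit function
`θ(t) = e^{φ(6ac(9c+1)t/(3c−1))} − 1` for `t ≤ 1/(3c)` and
`θ(t) = e^{φ(2a(3+t)/(1−t))} − 1` for `1/(3c) < t < 1`. -/
theorem stmt14 {X : Type*} [MetricSpace X] {Y : Type*} [MetricSpace Y]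
    [CompleteSpace X] [CompleteSpace Y] (c : ℝ) (hc : 1 ≤ c)
    (hX : QCSpace c X) (hY : QCSpace c Y)
    (G : Set X) (G' : Set Y) (hG : IsProperDomain G) (hG' : IsProperDomain G')
    (a : ℝ) (ha : 1 ≤ a) (hGJ : LocallyJohn a G) (hG'J : LocallyJohn a G')
    (φ : ℝ → ℝ) (hφ0 : φ 0 = 0) (hφmono : StrictMonoOn φ (Set.Ici 0))
    (hφcont : ContinuousOn φ (Set.Ici 0))
    (hφsurj : Set.SurjOn φ (Set.Ici 0) (Set.Ici 0))
    (hφge : ∀ t, 0 ≤ t → t ≤ φ t)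
    (f : ↥G ≃ₜ ↥G') (hf : FQC φ f) :
    ∀ x y : ↥G, dist (x : X) (y : X) < bdist G ↑x →
      dist (f x : Y) (f y : Y) / bdist G' ↑(f x) ≤
        (if dist (x : X) (y : X) / bdist G ↑x ≤ 1 / (3 * c) then
            Real.exp (φ (6 * a * c * (9 * c + 1) *
              (dist (x : X) (y : X) / bdist G ↑x) / (3 * c - 1))) - 1
          else
            Real.exp (φ (2 * a * (3 + dist (x : X) (y : X) / bdist G ↑x) /
              (1 - dist (x : X) (y : X) / bdist G ↑x))) - 1) :=
  stmt14' c hc hX hY G G' hG hG' a ha hGJ hG'J φ hφ0 hφmono hφcont hφsurj hφge f hf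
end
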